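/- arXiv:1703.07068 — 2 statements merged into one kernel-verified Lean document; each statement's English description precedes it below -/
import Mathlib

section
/- Consider the second-order system p' = q, q'(t) = f⁰(x(t),u(t)) + θᵀσ(x(t),u(t)) + ε(x(t),u(t)) with x = (p,q), and the observer p̂' = q̂, q̂'(t) = f⁰(x̂(t),u(t)) + θ̂(t)ᵀσ(x̂(t),u(t)) + ν(t) with x̂ = (p̂,q̂), where ν = α²p̃ − (k+α+β)η, and where η is differentiable with η' = −βη − kr − αq̃. Here p̃ = p − p̂, q̃ = q − q̂, θ̃ = θ − θ̂, and r = q̃ + αp̃ + η. Assume p, q, p̂, q̂, η are differentiable and u, θ̂ are functions of time. Then the filtered error r is differentiable and satisfies, for all t, r'(t) = −k r(t) + f̃⁰(t) + θᵀσ̃(t) − θ̃(t)ᵀσ̃(t) + θ̃(t)ᵀσ(x(t),u(t)) + ε(x(t),u(t)) − α² p̃(t) + (k+α) η(t), where f̃⁰(t) ≜ f⁰(x(t),u(t)) − f⁰(x̂(t),u(t)) and σ̃(t) ≜ σ(x(t),u(t)) − σ(x̂(t),u(t)). -/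
/-- `θᵀ v`: the product of the transpose of a `d × n` matrix with a vector in `ℝᵈ`,
yielding a vector in `ℝⁿ`. -/
noncomputable def matTmul {d n : ℕ} (θ : Matrix (Fin d) (Fin n) ℝ)
    (v : EuclideanSpace ℝ (Fin d)) : EuclideanSpace ℝ (Fin n) :=
  (EuclideanSpace.equiv (Fin n) ℝ).symm (θ.transpose.mulVec (EuclideanSpace.equiv (Fin d) ℝ v))

lemma matTmul_sub_vec {d n : ℕ} (θ : Matrix (Fin d) (Fin n) ℝ)
    (a b : EuclideanSpace ℝ (Fin d)) :
    matTmul θ (a - b) = matTmul θ a - matTmul θ b := by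
  simp [matTmul, Matrix.mulVec_sub]

lemma matTmul_sub_mat {d n : ℕ} (θ₁ θ₂ : Matrix (Fin d) (Fin n) ℝ)
    (a : EuclideanSpace ℝ (Fin d)) :
    matTmul (θ₁ - θ₂) a = matTmul θ₁ a - matTmul θ₂ a := by
  simp [matTmul, Matrix.transpose_sub, Matrix.sub_mulVec]

theorem stmt_5 (n m d : ℕ) (α β k : ℝ) (hα : 0 < α) (hβ : 0 < β) (hk : 0 < k)
    (f0 : EuclideanSpace ℝ (Fin n) × EuclideanSpace ℝ (Fin n) →
      EuclideanSpace ℝ (Fin m) → EuclideanSpace ℝ (Fin n))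
    (σ : EuclideanSpace ℝ (Fin n) × EuclideanSpace ℝ (Fin n) →
      EuclideanSpace ℝ (Fin m) → EuclideanSpace ℝ (Fin d))
    (ε : EuclideanSpace ℝ (Fin n) × EuclideanSpace ℝ (Fin n) →
      EuclideanSpace ℝ (Fin m) → EuclideanSpace ℝ (Fin n))
    (hf0 : Continuous (Function.uncurry f0)) (hσ : Continuous (Function.uncurry σ))
    (hε : Continuous (Function.uncurry ε))
    (θ : Matrix (Fin d) (Fin n) ℝ) (θh : ℝ → Matrix (Fin d) (Fin n) ℝ)
    (p q ph qh η ν : ℝ → EuclideanSpace ℝ (Fin n)) (u : ℝ → EuclideanSpace ℝ (Fin m))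
    (hp : ∀ t, HasDerivAt p (q t) t)
    (hq : ∀ t, HasDerivAt q
      (f0 (p t, q t) (u t) + matTmul θ (σ (p t, q t) (u t)) + ε (p t, q t) (u t)) t)
    (hph : ∀ t, HasDerivAt ph (qh t) t)
    (hqh : ∀ t, HasDerivAt qh
      (f0 (ph t, qh t) (u t) + matTmul (θh t) (σ (ph t, qh t) (u t)) + ν t) t)
    (hν : ∀ t, ν t = (α ^ 2) • (p t - ph t) - (k + α + β) • η t)
    (hη : ∀ t, HasDerivAt η
      (-(β • η t) - k • ((q t - qh t) + α • (p t - ph t) + η t) - α • (q t - qh t)) t)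
    (t : ℝ) :
    HasDerivAt (fun s => (q s - qh s) + α • (p s - ph s) + η s)
      (-(k • ((q t - qh t) + α • (p t - ph t) + η t))
        + (f0 (p t, q t) (u t) - f0 (ph t, qh t) (u t))
        + matTmul θ (σ (p t, q t) (u t) - σ (ph t, qh t) (u t))
        - matTmul (θ - θh t) (σ (p t, q t) (u t) - σ (ph t, qh t) (u t))
        + matTmul (θ - θh t) (σ (p t, q t) (u t))
        + ε (p t, q t) (u t)
        - (α ^ 2) • (p t - ph t) + (k + α) • η t) t := by
  have h := (((hq t).sub (hqh t)).add (((hp t).sub (hph t)).const_smul α)).add (hη t)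
  refine h.congr_deriv ?_
  symm
  rw [hν t]
  simp only [matTmul_sub_vec, matTmul_sub_mat]
  module
end

section
/- Let β₁, k_θ > 0. Let 𝒢 ∈ ℝ^{p×p} be a constant symmetric matrix and Q ∈ ℝ^{p×n} a constant matrix. Let Γ : ℝ → ℝ^{p×p} be differentiable with Γ(t) symmetric and invertible for all t and Γ'(t) = β₁Γ(t) − k_θΓ(t)𝒢Γ(t), and let θ̃ : ℝ → ℝ^{p×n} be differentiable with θ̃'(t) = −k_θ Γ(t) 𝒢 θ̃(t) − k_θ Γ(t) Q. Then the function t ↦ ½ tr( θ̃(t)ᵀ Γ(t)⁻¹ θ̃(t) ) is differentiable with derivative equal to −½ tr( θ̃(t)ᵀ ( k_θ 𝒢 + β₁ Γ(t)⁻¹ ) θ̃(t) ) − k_θ tr( θ̃(t)ᵀ Q ) for all t. -/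
/-!
The inverse `P = Γ⁻¹` of the gain obeys the linear equation `P' = k_θ 𝒢 - β₁ P`, and
`P θ̃' = -k_θ (𝒢 θ̃ + Q)`. Since `P` is symmetric, the derivative of `tr (θ̃ᵀ P θ̃)` is
`tr (θ̃ᵀ P' θ̃) + 2 tr (θ̃ᵀ P θ̃')`, and substituting both identities gives the claim.
-/

open Matrix

attribute [local instance] Matrix.normedAddCommGroup Matrix.normedSpace

section MatrixCalculus

variable {𝕜 : Type*} [NontriviallyNormedField 𝕜] {l m n : Type*} {t : 𝕜}

theorem Matrix.hasDerivAt_iff_entries [Fintype n] {M : 𝕜 → Matrix m n 𝕜} {M' : Matrix m n 𝕜} :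
    HasDerivAt M M' t ↔ ∀ i j, HasDerivAt (fun s => M s i j) (M' i j) t :=
  hasDerivAt_pi.trans <| forall_congr' fun _ => hasDerivAt_pi

theorem HasDerivAt.matrix_transpose [Fintype m] [Fintype n] {M : 𝕜 → Matrix m n 𝕜}
    {M' : Matrix m n 𝕜} (hM : HasDerivAt M M' t) : HasDerivAt (fun s => (M s)ᵀ) M'ᵀ t :=
  Matrix.hasDerivAt_iff_entries.2 fun i j => Matrix.hasDerivAt_iff_entries.1 hM j i

theorem HasDerivAt.matrix_mul [Fintype m] [Fintype n] {A : 𝕜 → Matrix l m 𝕜}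
    {B : 𝕜 → Matrix m n 𝕜} {A' : Matrix l m 𝕜} {B' : Matrix m n 𝕜} (hA : HasDerivAt A A' t)
    (hB : HasDerivAt B B' t) :
    HasDerivAt (fun s => A s * B s) (A' * B t + A t * B') t := by
  rw [Matrix.hasDerivAt_iff_entries] at hA hB ⊢
  intro i j
  simp only [Matrix.mul_apply, Matrix.add_apply, ← Finset.sum_add_distrib]
  exact HasDerivAt.fun_sum fun k _ => (hA i k).mul (hB k j)

theorem HasDerivAt.matrix_trace [Fintype n] {M : 𝕜 → Matrix n n 𝕜} {M' : Matrix n n 𝕜}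
    (hM : HasDerivAt M M' t) : HasDerivAt (fun s => (M s).trace) M'.trace t :=
  HasDerivAt.fun_sum fun i _ => Matrix.hasDerivAt_iff_entries.1 hM i i

theorem HasDerivAt.matrix_inv [CompleteSpace 𝕜] [Fintype n] [DecidableEq n]
    {A : 𝕜 → Matrix n n 𝕜} {A' : Matrix n n 𝕜} (hA : HasDerivAt A A' t) (hu : IsUnit (A t)) :
    HasDerivAt (fun s => (A s)⁻¹) (-((A t)⁻¹ * A' * (A t)⁻¹)) t := by
  -- `HasDerivAt` only sees the topology, which the submultiplicative `L∞`-operator norm shares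
  -- with the entrywise one; that norm makes `Matrix n n 𝕜` a complete normed algebra.
  let _ := Matrix.linftyOpNormedRing (n := n) (α := 𝕜)
  let _ := Matrix.linftyOpNormedAlgebra (R := 𝕜) (n := n) (α := 𝕜)
  have _ : @CompleteSpace (Matrix n n 𝕜) PseudoMetricSpace.toUniformSpace :=
    FiniteDimensional.complete 𝕜 _
  obtain ⟨u, hu⟩ := hu
  have hinv : ((u⁻¹ : (Matrix n n 𝕜)ˣ) : Matrix n n 𝕜) = (A t)⁻¹ := by
    rw [← hu, Matrix.coe_units_inv]
  have h := (hu ▸ hasFDerivAt_ringInverse (𝕜 := 𝕜) u).comp_hasDerivAt t hA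
  rw [_root_.neg_apply, ContinuousLinearMap.mulLeftRight_apply, hinv] at h
  rwa [show (fun s => (A s)⁻¹) = Ring.inverse ∘ A from
    funext fun _ => Matrix.nonsing_inv_eq_ringInverse _]

theorem HasDerivAt.trace_transpose_mul_mul [Fintype m] [Fintype n] {θ : 𝕜 → Matrix m n 𝕜}
    {P : 𝕜 → Matrix m m 𝕜} {θ' : Matrix m n 𝕜} {P' : Matrix m m 𝕜} (hθ : HasDerivAt θ θ' t)
    (hP : HasDerivAt P P' t) (hsym : (P t).IsSymm) :
    HasDerivAt (fun s => ((θ s)ᵀ * P s * θ s).trace)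
      (((θ t)ᵀ * P' * θ t).trace + 2 * ((θ t)ᵀ * P t * θ').trace) t := by
  refine ((hθ.matrix_transpose.matrix_mul hP).matrix_mul hθ).matrix_trace.congr_deriv ?_
  have hswap : (θ'ᵀ * P t * θ t).trace = ((θ t)ᵀ * P t * θ').trace := by
    rw [← Matrix.trace_transpose, Matrix.transpose_mul, Matrix.transpose_mul, hsym.eq,
      Matrix.transpose_transpose, Matrix.mul_assoc]
  simp only [Matrix.add_mul, Matrix.trace_add, hswap]
  ring

end MatrixCalculus

theorem Matrix.inv_mul_sub_mul_mul_inv {n : Type*} [Fintype n] [DecidableEq n] {R : Type*}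
    [CommRing R] {A : Matrix n n R} (hA : IsUnit A) (a b : R) (G : Matrix n n R) :
    A⁻¹ * (a • A - b • (A * G * A)) * A⁻¹ = a • A⁻¹ - b • G := by
  have hdet := (Matrix.isUnit_iff_isUnit_det A).1 hA
  simp only [Matrix.mul_sub, Matrix.sub_mul, Matrix.mul_smul, Matrix.smul_mul, Matrix.mul_assoc,
    Matrix.nonsing_inv_mul_cancel_left A _ hdet, Matrix.mul_nonsing_inv _ hdet, Matrix.mul_one]

theorem stmt_10_general (n d : ℕ) (β₁ kθ : ℝ)
    (𝒢 : Matrix (Fin d) (Fin d) ℝ) (Q : Matrix (Fin d) (Fin n) ℝ)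
    (Γ : ℝ → Matrix (Fin d) (Fin d) ℝ)
    (hΓsym : ∀ t, (Γ t).IsSymm) (hΓunit : ∀ t, IsUnit (Γ t))
    (hΓ' : ∀ t, HasDerivAt Γ (β₁ • Γ t - kθ • (Γ t * 𝒢 * Γ t)) t)
    (θtil : ℝ → Matrix (Fin d) (Fin n) ℝ)
    (hθtil' : ∀ t, HasDerivAt θtil (-(kθ • (Γ t * 𝒢 * θtil t)) - kθ • (Γ t * Q)) t)
    (t : ℝ) :
    HasDerivAt (fun s => (1 / 2) * ((θtil s)ᵀ * (Γ s)⁻¹ * θtil s).trace)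
      (-(1 / 2) * ((θtil t)ᵀ * (kθ • 𝒢 + β₁ • (Γ t)⁻¹) * θtil t).trace
        - kθ * ((θtil t)ᵀ * Q).trace) t := by
  have hdet := (Matrix.isUnit_iff_isUnit_det _).1 (hΓunit t)
  have hinv := (hΓ' t).matrix_inv (hΓunit t)
  rw [Matrix.inv_mul_sub_mul_mul_inv (hΓunit t), neg_sub] at hinv
  have hV := (hθtil' t).trace_transpose_mul_mul hinv (hΓsym t).inv
  refine (hV.const_mul (1 / 2)).congr_deriv ?_
  simp only [Matrix.mul_assoc, Matrix.nonsing_inv_mul_cancel_left _ _ hdet, Matrix.mul_add,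
    Matrix.add_mul, Matrix.sub_mul, Matrix.mul_sub, Matrix.mul_neg, Matrix.mul_smul,
    Matrix.smul_mul, Matrix.trace_add, Matrix.trace_sub, Matrix.trace_neg, Matrix.trace_smul,
    smul_eq_mul]
  ring

theorem stmt_10 (n d : ℕ) (β₁ kθ : ℝ) (hβ₁ : 0 < β₁) (hkθ : 0 < kθ)
    (𝒢 : Matrix (Fin d) (Fin d) ℝ) (h𝒢sym : 𝒢.IsSymm) (Q : Matrix (Fin d) (Fin n) ℝ)
    (Γ : ℝ → Matrix (Fin d) (Fin d) ℝ)
    (hΓsym : ∀ t, (Γ t).IsSymm) (hΓunit : ∀ t, IsUnit (Γ t))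
    (hΓ' : ∀ t, HasDerivAt Γ (β₁ • Γ t - kθ • (Γ t * 𝒢 * Γ t)) t)
    (θtil : ℝ → Matrix (Fin d) (Fin n) ℝ)
    (hθtil' : ∀ t, HasDerivAt θtil (-(kθ • (Γ t * 𝒢 * θtil t)) - kθ • (Γ t * Q)) t)
    (t : ℝ) :
    HasDerivAt (fun s => (1 / 2) * ((θtil s)ᵀ * (Γ s)⁻¹ * θtil s).trace)
      (-(1 / 2) * ((θtil t)ᵀ * (kθ • 𝒢 + β₁ • (Γ t)⁻¹) * θtil t).trace
        - kθ * ((θtil t)ᵀ * Q).trace) t :=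
  stmt_10_general n d β₁ kθ 𝒢 Q Γ hΓsym hΓunit hΓ' θtil hθtil' t
end
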